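/- The following are equivalent for a partial order ≿ on a nonempty set X: (1) every set of preferences on X has a minimum upper bound with respect to single-crossing dominance; (2) every two-element set of preferences has a minimum upper bound; (3) ≿ is crown-free and diamond-free. -/

import Mathlib

/-!
An upper bound of `P` must weakly (strictly) prefer `x` to `y ≤ x` as soon as some chain
`x ≥ … ≥ y` is linked step by step by weak comparisons of members of `P` (one of them strict):
this is `Forced` (`StrictlyForced`). A minimum upper bound is therefore pinned down on comparable
pairs, namely by `Edge` and `StrictEdge`, and it exists iff these prescribed comparisons extend to a
preference, i.e. iff no cycle of edges contains a strict edge.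

In a diamond-free order every interval is a chain, and this lets two consecutive edges between
comparable points be composed, which shortens strict triangles. A chord would split a strict cycle
into two shorter ones, one of them strict. So a shortest strict cycle is a chordless cycle of the
comparability graph of length at least `4`; it zigzags, so it is a crown.

Conversely, on a diamond or a crown two rank preferences are chosen whose upper bounds force
a strict cycle on any minimum upper bound.
-/


variable {X : Type*}

/-- Strict part of a binary relation. -/
def SPref (R : X → X → Prop) (x y : X) : Prop := R x y ∧ ¬ R y x

/-- A preference: a complete and transitive binary relation. -/
def IsPref (R : X → X → Prop) : Prop := (∀ x y, R x y ∨ R y x) ∧ Transitive R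

/-- Single-crossing dominance (`R'` dominates `R`) w.r.t. the partial order `≤`. -/
def SC [PartialOrder X] (R' R : X → X → Prop) : Prop :=
  ∀ x y : X, y ≤ x → (R x y → R' x y) ∧ (SPref R x y → SPref R' x y)

/-- Upper bound of a set of preferences w.r.t. single-crossing dominance. -/
def IsUB [PartialOrder X] (P : Set (X → X → Prop)) (R' : X → X → Prop) : Prop :=
  IsPref R' ∧ ∀ R ∈ P, SC R' R

/-- Minimum upper bound of a set of preferences w.r.t. single-crossing dominance. -/
def IsMUB [PartialOrder X] (P : Set (X → X → Prop)) (Rs : X → X → Prop) : Prop :=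
  IsUB P Rs ∧ ∀ R'', IsUB P R'' → SC R'' Rs

/-- A `K`-crown (K ≥ 4 even) for the relation `le`, indexed by `1,…,K` with the cyclic
convention `a (K+1) = a 1`: non-adjacent elements are incomparable, and
`a (k-1) > a k < a (k+1)` for each even `k` with `1 < k ≤ K`. -/
def IsCrown (le : X → X → Prop) (K : ℕ) (a : ℕ → X) : Prop :=
  4 ≤ K ∧ Even K ∧
  (∀ k k', 1 ≤ k → k + 2 ≤ k' → k' ≤ K → ¬(k = 1 ∧ k' = K) →
    ¬ le (a k) (a k') ∧ ¬ le (a k') (a k)) ∧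
  (∀ k, 1 < k → k ≤ K → Even k →
    (le (a k) (a (k - 1)) ∧ ¬ le (a (k - 1)) (a k)) ∧
    (le (a k) (a (if k = K then 1 else k + 1)) ∧
      ¬ le (a (if k = K then 1 else k + 1)) (a k)))

/-- `le` contains no crowns. -/
def CrownFree (le : X → X → Prop) : Prop := ¬ ∃ K a, IsCrown le K a

/-- A diamond: `a ≥ b ≥ d`, `a ≥ c ≥ d`, with `b, c` incomparable. -/
def IsDiamond (le : X → X → Prop) (a b c d : X) : Prop :=
  le b a ∧ le d b ∧ le c a ∧ le d c ∧ ¬ le b c ∧ ¬ le c b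

/-- `le` contains no diamonds. -/
def DiamondFree (le : X → X → Prop) : Prop := ¬ ∃ a b c d, IsDiamond le a b c d

open Relation Function

section General

variable {α : Type*}

theorem exists_isPref_extension (E : α → α → Prop) :
    ∃ R, IsPref R ∧ ∀ x y, E x y → R x y ∧ (R y x → ReflTransGen E y x) := by
  let _ : Preorder α :=
    { le := ReflTransGen E, le_refl := fun _ => .refl, le_trans := fun _ _ _ => .trans }
  let f : α → LinearExtension (Antisymmetrization α (· ≤ ·)) :=
    fun x => toLinearExtension (toAntisymmetrization (· ≤ ·) x)
  have hmono : ∀ x y : α, x ≤ y → f x ≤ f y := fun _ _ h => toLinearExtension.monotone h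
  have hf : ∀ x y : α, x < y → f x < f y := fun _ _ h =>
    toLinearExtension.monotone.strictMono_of_injective (fun _ _ h => h)
      (toAntisymmetrization_lt_toAntisymmetrization_iff.mpr h)
  refine ⟨fun x y => f x ≤ f y, ⟨fun x y => le_total _ _, fun _ _ _ => le_trans⟩,
    fun x y hxy => ⟨hmono x y (.single hxy), fun hyx => ?_⟩⟩
  by_contra h
  exact (hf x y (lt_of_le_not_ge (.single hxy) h)).not_ge hyx

theorem Relation.ReflTransGen.exists_path {r : α → α → Prop} {a b : α}
    (h : ReflTransGen r a b) :
    ∃ n, ∃ f : ℕ → α, f 0 = a ∧ f n = b ∧ ∀ i < n, r (f i) (f (i + 1)) := by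
  induction h using ReflTransGen.head_induction_on with
  | refl => exact ⟨0, fun _ => b, rfl, rfl, by omega⟩
  | @head a c hac _ ih =>
    obtain ⟨n, f, hf0, hfn, hf⟩ := ih
    refine ⟨n + 1, fun | 0 => a | i + 1 => f i, rfl, hfn, fun i hi => ?_⟩
    cases i with
    | zero => simpa [hf0] using hac
    | succ i => exact hf i (by omega)

def IsStrictCycle (E S : α → α → Prop) (n : ℕ) (g : ℕ → α) : Prop :=
  g n = g 0 ∧ (∀ i < n, E (g i) (g (i + 1))) ∧ ∃ i < n, S (g i) (g (i + 1))

variable {E S : α → α → Prop}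

theorem exists_isStrictCycle_of_reflTransGen (hSE : ∀ x y, S x y → E x y) {x y : α}
    (hxy : S x y) (hyx : ReflTransGen E y x) : ∃ n g, IsStrictCycle E S n g := by
  obtain ⟨n, f, hf0, hfn, hf⟩ := hyx.exists_path
  refine ⟨n + 1, fun | 0 => x | i + 1 => f i, hfn, fun i hi => ?_, 0, by omega, by simpa [hf0]⟩
  cases i with
  | zero => simpa [hf0] using hSE x y hxy
  | succ i => exact hf i (by omega)

theorem IsStrictCycle.three_le (hasymm : ∀ x y, S x y → ¬ E y x) {n : ℕ} {g : ℕ → α}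
    (hg : IsStrictCycle E S n g) : 3 ≤ n := by
  obtain ⟨hclosed, hE, i, hi, hS⟩ := hg
  by_contra! hn
  interval_cases n <;> interval_cases i
  · have h0 := hE 0 (by omega)
    simp only [zero_add, hclosed] at hS h0
    exact hasymm _ _ hS h0
  · have h1 := hE 1 (by omega)
    simp only [zero_add, hclosed] at hS h1
    exact hasymm _ _ hS h1
  · have h0 := hE 0 (by omega)
    simp only [zero_add, hclosed] at hS h0
    exact hasymm _ _ hS h0

/-- The arc from `p` to `q`, closed up by an edge back to `p`. -/
theorem isStrictCycle_arc {n p q : ℕ} {g : ℕ → α} (hE : ∀ i < n, E (g i) (g (i + 1)))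
    (hpq : p < q) (hqn : q ≤ n) (hchord : E (g q) (g p))
    (hS : S (g q) (g p) ∨ ∃ i, p ≤ i ∧ i < q ∧ S (g i) (g (i + 1))) :
    IsStrictCycle E S (q - p + 1) fun j => if j ≤ q - p then g (p + j) else g p := by
  have hlast : (if q - p ≤ q - p then g (p + (q - p)) else g p) = g q := by
    simp [show p + (q - p) = q by omega]
  have hmid : ∀ j < q - p, (if j ≤ q - p then g (p + j) else g p) = g (p + j) ∧
      (if j + 1 ≤ q - p then g (p + (j + 1)) else g p) = g (p + j + 1) := fun j hj =>
    ⟨if_pos hj.le, by rw [if_pos (by omega), add_assoc]⟩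
  refine ⟨by simp, fun j hj => ?_, ?_⟩ <;> dsimp only
  · rcases Nat.lt_or_ge j (q - p) with hj' | hj'
    · rw [(hmid j hj').1, (hmid j hj').2]
      exact hE _ (by omega)
    · obtain rfl : j = q - p := by omega
      rw [hlast, if_neg (by omega)]
      exact hchord
  · rcases hS with hS | ⟨i, hpi, hiq, hS⟩
    · refine ⟨q - p, by omega, ?_⟩
      rw [hlast, if_neg (by omega)]
      exact hS
    · refine ⟨i - p, by omega, ?_⟩
      rw [(hmid (i - p) (by omega)).1, (hmid (i - p) (by omega)).2, show p + (i - p) = i by omega]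
      exact hS

/-- The closed walk that runs from `0` to `p`, jumps to `q`, and runs on to `n`. -/
theorem isStrictCycle_bypass {n p q : ℕ} {g : ℕ → α} (hclosed : g n = g 0)
    (hE : ∀ i < n, E (g i) (g (i + 1))) (hpq : p < q) (hqn : q ≤ n) (hchord : E (g p) (g q))
    (hS : S (g p) (g q) ∨ ∃ i < n, (i < p ∨ q ≤ i) ∧ S (g i) (g (i + 1))) :
    IsStrictCycle E S (n - (q - p) + 1) fun j => if j ≤ p then g j else g (j + (q - p) - 1) := by
  have hlow : ∀ j ≤ p, (if j ≤ p then g j else g (j + (q - p) - 1)) = g j := fun j hj =>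
    if_pos hj
  have hhigh : ∀ j, p < j → (if j ≤ p then g j else g (j + (q - p) - 1)) =
      g (j + (q - p) - 1) := fun j hj => if_neg (by omega)
  refine ⟨?_, fun j hj => ?_, ?_⟩ <;> dsimp only
  · rw [hhigh (n - (q - p) + 1) (by omega), hlow 0 (Nat.zero_le p),
      show n - (q - p) + 1 + (q - p) - 1 = n by omega, hclosed]
  · rcases lt_trichotomy j p with hjp | rfl | hjp
    · rw [hlow j hjp.le, hlow (j + 1) hjp]
      exact hE j (by omega)
    · rw [hlow j le_rfl, hhigh (j + 1) (by omega), show j + 1 + (q - j) - 1 = q by omega]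
      exact hchord
    · rw [hhigh j hjp, hhigh (j + 1) (by omega), show j + 1 + (q - p) - 1 = j + (q - p) - 1 + 1
        by omega]
      exact hE _ (by omega)
  · rcases hS with hS | ⟨i, hin, hi | hi, hS⟩
    · refine ⟨p, by omega, ?_⟩
      rw [hlow p le_rfl, hhigh (p + 1) (by omega), show p + 1 + (q - p) - 1 = q by omega]
      exact hS
    · refine ⟨i, by omega, ?_⟩
      rw [hlow i hi.le, hlow (i + 1) hi]
      exact hS
    · refine ⟨i + 1 - (q - p), by omega, ?_⟩
      rw [hhigh (i + 1 - (q - p)) (by omega), hhigh (i + 1 - (q - p) + 1) (by omega),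
        show i + 1 - (q - p) + (q - p) - 1 = i by omega,
        show i + 1 - (q - p) + 1 + (q - p) - 1 = i + 1 by omega]
      exact hS

theorem IsStrictCycle.not_chord (hSE : ∀ x y, S x y → E x y)
    {n : ℕ} {g : ℕ → α} (hg : IsStrictCycle E S n g)
    (hmin : ∀ m < n, ∀ g', ¬ IsStrictCycle E S m g') {p q : ℕ} (hpq : p + 2 ≤ q) (hqn : q ≤ n)
    (hqp : q + 2 ≤ n + p) :
    ¬ ((E (g p) (g q) ∧ E (g q) (g p)) ∨ S (g p) (g q) ∨ S (g q) (g p)) := by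
  obtain ⟨hclosed, hE, i, hin, hi⟩ := hg
  have harc := fun hchord hS =>
    hmin _ (by omega) _ (isStrictCycle_arc (p := p) (q := q) hE (by omega) hqn hchord hS)
  have hbypass := fun hchord hS =>
    hmin _ (by omega) _ (isStrictCycle_bypass (p := p) (q := q) hclosed hE (by omega) hqn hchord hS)
  rintro (⟨hpq', hqp'⟩ | hpq' | hqp')
  · by_cases hiarc : p ≤ i ∧ i < q
    · exact harc hqp' (Or.inr ⟨i, hiarc.1, hiarc.2, hi⟩)
    · exact hbypass hpq' (Or.inr ⟨i, hin, by omega, hi⟩)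
  · exact hbypass (hSE _ _ hpq') (Or.inl hpq')
  · exact harc (hSE _ _ hqp') (Or.inl hqp')

end General

section ChordlessCycle

variable {α : Type*} [PartialOrder α] {n : ℕ} {g : ℕ → α}

/-- `g 0, …, g n = g 0` is a chordless cycle of the comparability graph. -/
def IsChordlessCycle (n : ℕ) (g : ℕ → α) : Prop :=
  g n = g 0 ∧ (∀ i < n, g i ≤ g (i + 1) ∨ g (i + 1) ≤ g i) ∧
    ∀ p q, p + 2 ≤ q → q ≤ n → q + 2 ≤ n + p → ¬ g p ≤ g q ∧ ¬ g q ≤ g p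

theorem IsChordlessCycle.lt_or_gt (hg : IsChordlessCycle n g) (hn : 4 ≤ n) {i : ℕ}
    (hi : i < n) : g i < g (i + 1) ∨ g (i + 1) < g i := by
  obtain ⟨-, hadj, hinc⟩ := hg
  rcases eq_or_ne (g i) (g (i + 1)) with he | hne
  · exfalso
    by_cases hi2 : i + 2 ≤ n
    · have := hinc i (i + 2) le_rfl hi2 (by omega)
      rcases hadj (i + 1) (by omega) with h | h <;> rw [← he] at h <;> tauto
    · obtain rfl : i = n - 1 := by omega
      have := hinc (n - 2) n (by omega) le_rfl (by omega)
      rw [show n - 1 + 1 = n by omega] at he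
      rcases hadj (n - 2) (by omega) with h | h <;>
        rw [show n - 2 + 1 = n - 1 by omega, he] at h <;> tauto
  · exact (hadj i hi).imp (lt_of_le_of_ne · hne) (lt_of_le_of_ne · hne.symm)

theorem IsChordlessCycle.parity (hg : IsChordlessCycle n g) (hn : 4 ≤ n) :
    Even n ∧ ∀ i < n, (g (i + 1) < g i ↔ (Even i ↔ g 1 < g 0)) := by
  have hstep := fun i (hi : i < n) => hg.lt_or_gt hn hi
  obtain ⟨hclosed, -, hinc⟩ := hg
  -- if `a` and `c` are incomparable, `b` is a common upper or a common lower bound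
  have hzigzag : ∀ a b c : α, ¬ a ≤ c → ¬ c ≤ a → (a < b ∨ b < a) → (b < c ∨ c < b) →
      (c < b ↔ a < b) := by
    intro a b c hac hca hab hbc
    rcases hab with hab | hab <;> rcases hbc with hbc | hbc
    · exact absurd (hab.trans hbc).le hac
    · exact iff_of_true hbc hab
    · exact iff_of_false hbc.not_gt hab.not_gt
    · exact absurd (hbc.trans hab).le hca
  have hnext : ∀ i, i + 2 ≤ n → (g (i + 2) < g (i + 1) ↔ ¬ g (i + 1) < g i) := by
    intro i hi
    have h := hinc i (i + 2) le_rfl hi (by omega)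
    rw [hzigzag _ _ _ h.1 h.2 (hstep i (by omega)) (hstep (i + 1) (by omega))]
    exact ⟨fun h' => h'.not_gt, ((hstep i (by omega)).resolve_right ·)⟩
  have hpar : ∀ i < n, (g (i + 1) < g i ↔ (Even i ↔ g 1 < g 0)) := by
    intro i hi
    induction i with
    | zero => simp
    | succ i ih =>
      rw [hnext i (by omega), ih (by omega), Nat.even_add_one]
      tauto
  refine ⟨?_, hpar⟩
  have h := hinc 1 (n - 1) (by omega) (by omega) (by omega)
  have hlast := hpar (n - 1) (by omega)
  have hstep' := hstep (n - 1) (by omega)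
  rw [show n - 1 + 1 = n by omega, hclosed] at hlast hstep'
  have hwrap := hzigzag _ _ _ h.2 h.1 hstep' (hstep 0 (by omega))
  have : ¬ Even (n - 1) := fun h' => by
    have := hstep'.resolve_right
    have := @lt_asymm _ _ (g (n - 1)) (g 0)
    tauto
  rw [Nat.even_iff] at this ⊢
  omega

theorem IsChordlessCycle.not_crownFree (hg : IsChordlessCycle n g) (hn : 4 ≤ n) :
    ¬ CrownFree ((· ≤ ·) : α → α → Prop) := by
  have hstep := fun i (hi : i < n) => hg.lt_or_gt hn hi
  obtain ⟨hneven, hpar⟩ := hg.parity hn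
  obtain ⟨hclosed, -, hinc⟩ := hg
  -- start the crown at a vertex where the walk goes down
  obtain ⟨t, ht, hdown, hwrap⟩ : ∃ t ≤ 1,
      (∀ i, t + i < n → (g (t + i + 1) < g (t + i) ↔ Even i)) ∧ g (n - 1 + t) < g t := by
    by_cases h0 : g 1 < g 0
    · refine ⟨0, zero_le_one, fun i hi => by simpa [h0] using hpar i (by omega), ?_⟩
      have hlast := hpar (n - 1) (by omega)
      have hstep' := hstep (n - 1) (by omega)
      rw [show n - 1 + 1 = n by omega, hclosed] at hlast hstep'
      have hodd : ¬ Even (n - 1) := by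
        rw [Nat.even_iff] at hneven ⊢; omega
      exact hstep'.resolve_right (by tauto)
    · refine ⟨1, le_rfl, fun i hi => ?_, ?_⟩
      · rw [hpar (1 + i) hi, add_comm 1 i, Nat.even_add_one]
        tauto
      · rw [show n - 1 + 1 = n by omega, hclosed]
        exact (hstep 0 (by omega)).resolve_right h0
  have hup : ∀ i, t + i < n → ¬ Even i → g (t + i) < g (t + i + 1) := fun i hi hodd =>
    (hstep _ hi).resolve_right (by rwa [hdown i hi])
  refine fun hcf => hcf ⟨n, fun k => g (k - 1 + t), hn, hneven, ?_, ?_⟩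
  · intro k k' hk hkk' hk'n hnot
    exact hinc _ _ (by omega) (by omega) (by omega)
  · intro k hk1 hkn hk
    rw [Nat.even_iff] at hk
    have hlow : g (k - 1 + t) < g (k - 1 - 1 + t) := by
      have h := (hdown (k - 2) (by omega)).mpr (Nat.even_iff.mpr (by omega))
      rwa [show t + (k - 2) + 1 = k - 1 + t by omega, show t + (k - 2) = k - 1 - 1 + t by omega]
        at h
    have hhigh : g (k - 1 + t) < g ((if k = n then 1 else k + 1) - 1 + t) := by
      split_ifs with hkn'
      · subst hkn'
        simpa using hwrap
      · have h := hup (k - 1) (by omega) (by rw [Nat.even_iff]; omega)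
        rwa [show t + (k - 1) = k - 1 + t by omega, show k - 1 + t + 1 = k + 1 - 1 + t by omega]
          at h
    exact ⟨⟨hlow.le, hlow.not_ge⟩, ⟨hhigh.le, hhigh.not_ge⟩⟩

end ChordlessCycle

theorem DiamondFree.isChain_Icc [PartialOrder X] (hdf : DiamondFree ((· ≤ ·) : X → X → Prop))
    (z x : X) : IsChain (· ≤ ·) (Set.Icc z x) := by
  intro y hy c hc _
  by_contra h
  rw [not_or] at h
  exact hdf ⟨x, y, c, z, hy.2, hy.1, hc.2, hc.1, h.1, h.2⟩

section Forced

variable [PartialOrder X] {P : Set (X → X → Prop)}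

def Link (P : Set (X → X → Prop)) (x y : X) : Prop := y ≤ x ∧ ∃ R ∈ P, R x y

def StrictLink (P : Set (X → X → Prop)) (x y : X) : Prop := y ≤ x ∧ ∃ R ∈ P, SPref R x y

def Forced (P : Set (X → X → Prop)) : X → X → Prop := ReflTransGen (Link P)

def StrictlyForced (P : Set (X → X → Prop)) (x y : X) : Prop :=
  ∃ u v, Forced P x u ∧ StrictLink P u v ∧ Forced P v y

theorem StrictLink.strictlyForced {x y : X} (h : StrictLink P x y) : StrictlyForced P x y :=
  ⟨x, y, .refl, h, .refl⟩

theorem Forced.le {x y : X} (h : Forced P x y) : y ≤ x := by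
  induction h with
  | refl => exact le_rfl
  | tail _ h ih => exact h.1.trans ih

theorem Forced.trans {x y z : X} (h₁ : Forced P x y) (h₂ : Forced P y z) : Forced P x z :=
  ReflTransGen.trans h₁ h₂

theorem Forced.trans_strictlyForced {x y z : X} (h₁ : Forced P x y)
    (h₂ : StrictlyForced P y z) : StrictlyForced P x z := by
  obtain ⟨u, v, hyu, huv, hvz⟩ := h₂
  exact ⟨u, v, h₁.trans hyu, huv, hvz⟩

theorem StrictlyForced.trans_forced {x y z : X} (h₁ : StrictlyForced P x y)
    (h₂ : Forced P y z) : StrictlyForced P x z := by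
  obtain ⟨u, v, hxu, huv, hvy⟩ := h₁
  exact ⟨u, v, hxu, huv, hvy.trans h₂⟩

theorem StrictlyForced.forced {x y : X} (h : StrictlyForced P x y) : Forced P x y := by
  obtain ⟨u, v, hxu, ⟨hvu, R, hR, huv⟩, hvy⟩ := h
  exact hxu.trans (.head ⟨hvu, R, hR, huv.1⟩ hvy)

theorem StrictlyForced.lt {x y : X} (h : StrictlyForced P x y) : y < x := by
  obtain ⟨u, v, hxu, ⟨hvu, R, -, huv⟩, hvy⟩ := h
  have hne : v ≠ u := by
    rintro rfl
    exact huv.2 huv.1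
  exact hvy.le.trans_lt ((lt_of_le_of_ne hvu hne).trans_le hxu.le)

theorem Forced.rel_of_isUB {R : X → X → Prop} (hR : IsUB P R) {x y : X} (h : Forced P x y) :
    R x y := by
  induction h with
  | refl => exact (hR.1.1 x x).elim id id
  | tail _ hl ih =>
    obtain ⟨hle, R', hR', h⟩ := hl
    exact hR.1.2 ih ((hR.2 R' hR' _ _ hle).1 h)

theorem StrictlyForced.sPref_of_isUB {R : X → X → Prop} (hR : IsUB P R) {x y : X}
    (h : StrictlyForced P x y) : SPref R x y := by
  obtain ⟨u, v, hxu, ⟨hvu, R', hR', huv⟩, hvy⟩ := h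
  have hxu := hxu.rel_of_isUB hR
  have huv := (hR.2 R' hR' u v hvu).2 huv
  have hvy := hvy.rel_of_isUB hR
  exact ⟨hR.1.2 (hR.1.2 hxu huv.1) hvy, fun hyx => huv.2 (hR.1.2 (hR.1.2 hvy hyx) hxu)⟩

theorem Link.split (hP : ∀ R ∈ P, IsPref R) {a c y : X} (h : Link P a c) (hcy : c ≤ y)
    (hya : y ≤ a) : (Link P a y ∨ StrictLink P y c) ∧ (Link P y c ∨ StrictLink P a y) := by
  obtain ⟨-, R, hR, hac⟩ := h
  obtain ⟨htot, htr⟩ := hP R hR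
  constructor
  · by_cases hay : R a y
    · exact .inl ⟨hya, R, hR, hay⟩
    · exact .inr ⟨hcy, R, hR, htr ((htot a y).resolve_left hay) hac,
        fun hcy' => hay (htr hac hcy')⟩
  · by_cases hya' : R y a
    · exact .inl ⟨hcy, R, hR, htr hya' hac⟩
    · exact .inr ⟨hya, R, hR, (htot y a).resolve_left hya', hya'⟩

theorem StrictLink.split (hP : ∀ R ∈ P, IsPref R) {u v y : X} (h : StrictLink P u v)
    (hvy : v ≤ y) (hyu : y ≤ u) : StrictLink P u y ∨ StrictLink P y v := by
  obtain ⟨-, R, hR, huv, hvu⟩ := h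
  obtain ⟨htot, htr⟩ := hP R hR
  by_cases hyu' : R y u
  · exact .inr ⟨hvy, R, hR, htr hyu' huv, fun hvy' => hvu (htr hvy' hyu')⟩
  · exact .inl ⟨hyu, R, hR, (htot u y).resolve_right hyu', hyu'⟩

theorem Forced.split (hP : ∀ R ∈ P, IsPref R) (hdf : DiamondFree ((· ≤ ·) : X → X → Prop))
    {x y z : X} (h : Forced P x z) (hzy : z ≤ y) (hyx : y ≤ x) :
    (Forced P y z ∨ StrictlyForced P x y) ∧ (Forced P x y ∨ StrictlyForced P y z) := by
  revert hyx
  induction h using ReflTransGen.head_induction_on with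
  | refl =>
    intro hyz
    obtain rfl := le_antisymm hyz hzy
    exact ⟨.inl .refl, .inl .refl⟩
  | @head a c hac hcz ih =>
    intro hya
    rcases (hdf.isChain_Icc z a).total ⟨hzy, hya⟩ ⟨Forced.le hcz, hac.1⟩ with hyc | hcy
    · obtain ⟨h₁, h₂⟩ := ih hyc
      exact ⟨h₁.imp_right (Forced.trans_strictlyForced (.single hac)),
        h₂.imp_left (.head hac)⟩
    · obtain ⟨h₁, h₂⟩ := hac.split hP hcy hya
      exact ⟨h₂.imp (.head · hcz) StrictLink.strictlyForced,
        h₁.imp .single fun h => h.strictlyForced.trans_forced hcz⟩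

theorem StrictlyForced.split (hP : ∀ R ∈ P, IsPref R)
    (hdf : DiamondFree ((· ≤ ·) : X → X → Prop)) {x y z : X} (h : StrictlyForced P x z)
    (hzy : z ≤ y) (hyx : y ≤ x) : StrictlyForced P x y ∨ StrictlyForced P y z := by
  obtain ⟨u, v, hxu, huv, hvz⟩ := h
  by_cases hyv : y ≤ v
  · exact (hvz.split hP hdf hzy hyv).2.imp_left fun h => ⟨u, v, hxu, huv, h⟩
  by_cases huy : u ≤ y
  · exact ((hxu.split hP hdf huy hyx).1.imp_left fun h => ⟨u, v, h, huv, hvz⟩).symm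
  have hchain := hdf.isChain_Icc z x
  have hvy := (hchain.total ⟨hzy, hyx⟩ ⟨hvz.le, huv.1.trans hxu.le⟩).resolve_left hyv
  have hyu := (hchain.total ⟨hzy, hyx⟩ ⟨hvz.le.trans huv.1, hxu.le⟩).resolve_right huy
  exact (huv.split hP hvy hyu).imp (fun h => hxu.trans_strictlyForced h.strictlyForced)
    fun h => h.strictlyForced.trans_forced hvz

end Forced

section Edge

variable [PartialOrder X] {P : Set (X → X → Prop)}

def Edge (P : Set (X → X → Prop)) (x y : X) : Prop :=
  (y ≤ x ∧ Forced P x y) ∨ (x ≤ y ∧ ¬ StrictlyForced P y x)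

def StrictEdge (P : Set (X → X → Prop)) (x y : X) : Prop :=
  (y ≤ x ∧ StrictlyForced P x y) ∨ (x ≤ y ∧ ¬ Forced P y x)

theorem StrictEdge.edge {x y : X} (h : StrictEdge P x y) : Edge P x y :=
  h.imp (And.imp_right StrictlyForced.forced) (And.imp_right fun h hs => h hs.forced)

theorem StrictEdge.strictlyForced {x y : X} (h : StrictEdge P x y) (hyx : y ≤ x) :
    StrictlyForced P x y := by
  rcases h with ⟨-, h⟩ | ⟨hxy, h⟩
  · exact h
  · obtain rfl := le_antisymm hxy hyx
    exact absurd .refl h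

theorem StrictEdge.not_forced {x y : X} (h : StrictEdge P x y) (hxy : x ≤ y) :
    ¬ Forced P y x := by
  rcases h with ⟨hyx, h⟩ | ⟨-, h⟩
  · obtain rfl := le_antisymm hxy hyx
    exact absurd h.lt (lt_irrefl x)
  · exact h

theorem StrictEdge.not_edge {x y : X} (h : StrictEdge P x y) : ¬ Edge P y x := by
  rintro (⟨hxy, hW⟩ | ⟨hyx, hS⟩)
  · exact h.not_forced hxy hW
  · exact hS (h.strictlyForced hyx)

theorem Edge.le_or_le {x y : X} (h : Edge P x y) : y ≤ x ∨ x ≤ y :=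
  h.imp And.left And.left

theorem edge_trichotomy {x y : X} (h : y ≤ x ∨ x ≤ y) :
    (Edge P x y ∧ Edge P y x) ∨ StrictEdge P x y ∨ StrictEdge P y x := by
  have key : ∀ {x y : X}, y ≤ x →
      (Edge P x y ∧ Edge P y x) ∨ StrictEdge P x y ∨ StrictEdge P y x := by
    intro x y hyx
    by_cases hS : StrictlyForced P x y
    · exact .inr (.inl (.inl ⟨hyx, hS⟩))
    by_cases hW : Forced P x y
    · exact .inl ⟨.inl ⟨hyx, hW⟩, .inr ⟨hyx, hS⟩⟩
    · exact .inr (.inr (.inr ⟨hyx, hW⟩))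
  rcases h with h | h
  · exact key h
  · rcases key h with ⟨h₁, h₂⟩ | h | h
    exacts [.inl ⟨h₂, h₁⟩, .inr (.inr h), .inr (.inl h)]

theorem Edge.trans (hP : ∀ R ∈ P, IsPref R) (hdf : DiamondFree ((· ≤ ·) : X → X → Prop))
    {a b c : X} (h₁ : Edge P a b) (h₂ : Edge P b c) (hac : c ≤ a ∨ a ≤ c) :
    Edge P a c ∧ (StrictEdge P a b ∨ StrictEdge P b c → StrictEdge P a c) := by
  rcases h₁ with ⟨hba, hW₁⟩ | ⟨hab, hN₁⟩ <;> rcases h₂ with ⟨hcb, hW₂⟩ | ⟨hbc, hN₂⟩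
  · have hca := hcb.trans hba
    refine ⟨.inl ⟨hca, hW₁.trans hW₂⟩, fun hs => .inl ⟨hca, ?_⟩⟩
    rcases hs with hs | hs
    · exact (hs.strictlyForced hba).trans_forced hW₂
    · exact hW₁.trans_strictlyForced (hs.strictlyForced hcb)
  · rcases hac with hca | hac
    · refine ⟨.inl ⟨hca, (hW₁.split hP hdf hbc hca).2.resolve_right hN₂⟩,
        fun hs => .inl ⟨hca, ?_⟩⟩
      rcases hs with hs | hs
      · exact ((hs.strictlyForced hba).split hP hdf hbc hca).resolve_right hN₂
      · exact (hW₁.split hP hdf hbc hca).1.resolve_left (hs.not_forced hbc)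
    · refine ⟨.inr ⟨hac, fun hs => hN₂ (hs.trans_forced hW₁)⟩, fun hs => .inr ⟨hac, ?_⟩⟩
      rcases hs with hs | hs
      · exact fun hW => hN₂ (hW.trans_strictlyForced (hs.strictlyForced hba))
      · exact fun hW => hs.not_forced hbc (hW.trans hW₁)
  · rcases hac with hca | hac
    · refine ⟨.inl ⟨hca, (hW₂.split hP hdf hca hab).1.resolve_right hN₁⟩,
        fun hs => .inl ⟨hca, ?_⟩⟩
      rcases hs with hs | hs
      · exact (hW₂.split hP hdf hca hab).2.resolve_left (hs.not_forced hab)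
      · exact ((hs.strictlyForced hcb).split hP hdf hca hab).resolve_left hN₁
    · refine ⟨.inr ⟨hac, fun hs => hN₁ (hW₂.trans_strictlyForced hs)⟩, fun hs => .inr ⟨hac, ?_⟩⟩
      rcases hs with hs | hs
      · exact fun hW => hs.not_forced hab (hW₂.trans hW)
      · exact fun hW => hN₁ ((hs.strictlyForced hcb).trans_forced hW)
  · have hac := hab.trans hbc
    refine ⟨.inr ⟨hac, fun hs => (hs.split hP hdf hab hbc).elim hN₂ hN₁⟩,
      fun hs => .inr ⟨hac, ?_⟩⟩
    rcases hs with hs | hs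
    · exact fun hW => (hW.split hP hdf hab hbc).1.elim (hs.not_forced hab) hN₂
    · exact fun hW => (hW.split hP hdf hab hbc).2.elim (hs.not_forced hbc) hN₁

theorem not_isStrictCycle_edge (hP : ∀ R ∈ P, IsPref R)
    (hdf : DiamondFree ((· ≤ ·) : X → X → Prop)) (hcf : CrownFree ((· ≤ ·) : X → X → Prop))
    (n : ℕ) (g : ℕ → X) : ¬ IsStrictCycle (Edge P) (StrictEdge P) n g := by
  induction n using Nat.strong_induction_on generalizing g with
  | _ n ih =>
  intro hg
  have h3 := hg.three_le fun _ _ h => h.not_edge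
  obtain ⟨hclosed, hE, i, hi, hS⟩ := id hg
  rcases h3.eq_or_lt with rfl | h4
  · -- a triangle shortcuts to a strict cycle of length 2
    have h₂₀ := (hE 2 (by omega)).le_or_le
    rw [hclosed] at h₂₀
    have h₀₂ := (hE 0 (by omega)).trans hP hdf (hE 1 (by omega)) h₂₀.symm
    refine ih 2 (by omega) _ (isStrictCycle_bypass (p := 0) (q := 2) hclosed hE (by omega)
      (by omega) h₀₂.1 ?_)
    by_cases hi2 : i < 2
    · exact .inl (h₀₂.2 (by interval_cases i; exacts [.inl hS, .inr hS]))
    · exact .inr ⟨i, hi, .inr (by omega), hS⟩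
  · -- a shortest strict cycle of length at least 4 is chordless, hence a crown
    refine IsChordlessCycle.not_crownFree ⟨hclosed, fun i hi => (hE i hi).le_or_le.symm,
      fun p q hpq hqn hqp => ?_⟩ h4 hcf
    have hchord := hg.not_chord (fun _ _ h => h.edge) (fun m hm g' => ih m hm g') hpq hqn hqp
    exact ⟨fun h => hchord (edge_trichotomy (.inr h)), fun h => hchord (edge_trichotomy (.inl h))⟩

theorem exists_isMUB (hP : ∀ R ∈ P, IsPref R) (hdf : DiamondFree ((· ≤ ·) : X → X → Prop))
    (hcf : CrownFree ((· ≤ ·) : X → X → Prop)) : ∃ Rs, IsMUB P Rs := by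
  obtain ⟨Rs, hRs, hext⟩ := exists_isPref_extension (Edge P)
  have hstrict : ∀ x y, StrictEdge P x y → SPref Rs x y := fun x y h =>
    ⟨(hext x y h.edge).1, fun hyx => by
      obtain ⟨n, g, hg⟩ := exists_isStrictCycle_of_reflTransGen (fun _ _ h => h.edge) h
        ((hext x y h.edge).2 hyx)
      exact not_isStrictCycle_edge hP hdf hcf n g hg⟩
  refine ⟨Rs, ⟨hRs, fun R hR x y hyx => ⟨fun hxy => ?_, fun hxy => ?_⟩⟩,
    fun R' hR' x y hyx => ⟨fun hxy => ?_, fun hxy => ?_⟩⟩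
  · exact (hext x y (.inl ⟨hyx, .single ⟨hyx, R, hR, hxy⟩⟩)).1
  · exact hstrict x y (.inl ⟨hyx, StrictLink.strictlyForced ⟨hyx, R, hR, hxy⟩⟩)
  · by_cases hW : Forced P x y
    · exact hW.rel_of_isUB hR'
    · exact absurd hxy (hstrict y x (.inr ⟨hyx, hW⟩)).2
  · by_cases hS : StrictlyForced P x y
    · exact hS.sPref_of_isUB hR'
    · exact absurd (hext y x (.inr ⟨hyx, hS⟩)).1 hxy.2

end Edge

section Counterexamples

def prefOfRank (u : X → ℕ) : X → X → Prop := fun x y => u y ≤ u x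

theorem isPref_prefOfRank (u : X → ℕ) : IsPref (prefOfRank u) :=
  ⟨fun x y => le_total (u y) (u x), fun _ _ _ h₁ h₂ => h₂.trans h₁⟩

theorem sPref_prefOfRank {u : X → ℕ} {x y : X} : SPref (prefOfRank u) x y ↔ u y < u x :=
  lt_iff_le_not_ge.symm

theorem IsPref.not_zigzag {R : X → X → Prop} (hR : IsPref R) {K : ℕ} {a : ℕ → X} (hK : 2 ≤ K)
    (hKe : K % 2 = 0) (hdown : ∀ j, 2 ≤ j → j ≤ K → j % 2 = 0 → R (a (j - 1)) (a j)) :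
    ¬ ∀ j, 2 ≤ j → j ≤ K → j % 2 = 0 → ¬ R (a (if j = K then 1 else j + 1)) (a j) := by
  intro hup
  have hwalk : ∀ r, 1 ≤ r → 2 * r ≤ K → R (a 1) (a (2 * r)) := by
    intro r hr hrK
    induction r with
    | zero => omega
    | succ r ih =>
      rcases Nat.eq_zero_or_pos r with rfl | hr0
      · exact hdown 2 le_rfl hrK rfl
      · have hstep := (hR.1 _ _).resolve_left (hup (2 * r) (by omega) (by omega) (by omega))
        rw [if_neg (by omega)] at hstep
        have hnext := hdown (2 * (r + 1)) (by omega) hrK (by omega)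
        rw [show 2 * (r + 1) - 1 = 2 * r + 1 by omega] at hnext
        exact hR.2 (hR.2 (ih hr0 (by omega)) hstep) hnext
  have hlast := hup K hK le_rfl hKe
  rw [if_pos rfl] at hlast
  exact hlast (by simpa [show 2 * (K / 2) = K by omega] using hwalk (K / 2) (by omega) (by omega))

variable [PartialOrder X]

theorem sc_prefOfRank {u v : X → ℕ}
    (h : ∀ x y, y ≤ x → (u y ≤ u x → v y ≤ v x) ∧ (u y < u x → v y < v x)) :
    SC (prefOfRank v) (prefOfRank u) := fun x y hyx =>
  ⟨(h x y hyx).1, fun hs => sPref_prefOfRank.mpr ((h x y hyx).2 (sPref_prefOfRank.mp hs))⟩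

theorem sc_extend {ι : Type*} {φ : ι → X} (hφ : Injective φ) {f g : ι → ℕ}
    (hf : ∀ i, 0 < f i) (hg : ∀ i, 0 < g i)
    (h : ∀ i j, φ j ≤ φ i → (f j ≤ f i → g j ≤ g i) ∧ (f j < f i → g j < g i)) :
    SC (prefOfRank (extend φ g 0)) (prefOfRank (extend φ f 0)) := by
  refine sc_prefOfRank fun x y hyx => ?_
  by_cases hx : ∃ i, φ i = x <;> by_cases hy : ∃ j, φ j = y
  · obtain ⟨i, rfl⟩ := hx
    obtain ⟨j, rfl⟩ := hy
    simpa only [hφ.extend_apply] using h i j hyx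
  · obtain ⟨i, rfl⟩ := hx
    simp only [hφ.extend_apply, extend_apply' _ _ _ hy, Pi.zero_apply]
    exact ⟨fun _ => (hg i).le, fun _ => hg i⟩
  · obtain ⟨j, rfl⟩ := hy
    simp only [hφ.extend_apply, extend_apply' _ _ _ hx, Pi.zero_apply]
    exact ⟨fun h' => absurd h' (hf j).not_ge, fun h' => absurd h' (Nat.not_lt_zero _)⟩
  · simp only [extend_apply' _ _ _ hx, extend_apply' _ _ _ hy]
    exact ⟨id, id⟩

theorem isUB_pair {R₁ R₂ R : X → X → Prop} (hR : IsPref R) (h₁ : SC R R₁) (h₂ : SC R R₂) :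
    IsUB {R₁, R₂} R := by
  refine ⟨hR, ?_⟩
  rintro R' (rfl | rfl)
  exacts [h₁, h₂]

variable {P : Set (X → X → Prop)} {Rs R : X → X → Prop} {x y : X}

theorem IsMUB.rel_of_mem (h : IsMUB P Rs) (hR : R ∈ P) (hyx : y ≤ x) (hxy : R x y) : Rs x y :=
  (h.1.2 R hR x y hyx).1 hxy

theorem IsMUB.sPref_of_mem (h : IsMUB P Rs) (hR : R ∈ P) (hyx : y ≤ x) (hxy : SPref R x y) :
    SPref Rs x y :=
  (h.1.2 R hR x y hyx).2 hxy

theorem IsMUB.not_rel (h : IsMUB P Rs) (hR : IsUB P R) (hyx : y ≤ x) (hxy : ¬ R x y) :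
    ¬ Rs x y :=
  fun h' => hxy ((h.2 R hR x y hyx).1 h')

theorem IsDiamond.le_cases {a b c d : X} (h : IsDiamond (· ≤ ·) a b c d) {i j : Fin 4}
    (hle : ![a, b, c, d] j ≤ ![a, b, c, d] i) : i = j ∨ i = 0 ∨ j = 3 := by
  obtain ⟨hba, hdb, hca, hdc, hbc, hcb⟩ := h
  have hab : ¬ a ≤ b := fun h => hcb (hca.trans h)
  have hac : ¬ a ≤ c := fun h => hbc (hba.trans h)
  have had : ¬ a ≤ d := fun h => hbc ((hba.trans h).trans hdc)
  have hbd : ¬ b ≤ d := fun h => hbc (h.trans hdc)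
  have hcd : ¬ c ≤ d := fun h => hcb (h.trans hdb)
  revert hle
  fin_cases i <;> fin_cases j <;> simp [hab, hac, had, hbd, hcd, hbc, hcb]

theorem IsDiamond.injective {a b c d : X} (h : IsDiamond (· ≤ ·) a b c d) :
    Injective ![a, b, c, d] := fun i j hij => by
  have key : ∀ i j : Fin 4, (i = j ∨ i = 0 ∨ j = 3) → (j = i ∨ j = 0 ∨ i = 3) → i = j := by
    decide
  exact key i j (h.le_cases hij.ge) (h.le_cases hij.le)

theorem IsDiamond.not_forall_exists_isMUB {a b c d : X} (h : IsDiamond (· ≤ ·) a b c d) :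
    ¬ ∀ R₁ R₂ : X → X → Prop, IsPref R₁ → IsPref R₂ → ∃ Rs, IsMUB {R₁, R₂} Rs := by
  obtain ⟨hba, hdb, hca, hdc, -, -⟩ := id h
  let φ : Fin 4 → X := ![a, b, c, d]
  have hφ : Injective φ := h.injective
  have hsc : ∀ f g : Fin 4 → ℕ, (∀ i, 0 < f i) → (∀ i, 0 < g i) →
      (∀ i j, (i = j ∨ i = 0 ∨ j = 3) → (f j ≤ f i → g j ≤ g i) ∧ (f j < f i → g j < g i)) →
      SC (prefOfRank (extend φ g 0)) (prefOfRank (extend φ f 0)) :=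
    fun f g hf hg hfg => sc_extend hφ hf hg fun i j hji => hfg i j (h.le_cases hji)
  have hrank : ∀ (f : Fin 4 → ℕ) i j, prefOfRank (extend φ f 0) (φ i) (φ j) ↔ f j ≤ f i :=
    fun f i j => by simp only [prefOfRank, hφ.extend_apply]
  -- A minimum upper bound gets `a ≥ b` from `R₁` and `b > d` from `R₂`, while the upper bounds
  -- `hUB₁` and `hUB₂` force `d > c` and `c > a`.
  set R₁ := prefOfRank (extend φ ![1, 1, 2, 3] 0)
  set R₂ := prefOfRank (extend φ ![1, 4, 2, 3] 0)
  have hUB₁ : IsUB {R₁, R₂} (prefOfRank (extend φ ![3, 3, 1, 2] 0)) :=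
    isUB_pair (isPref_prefOfRank _) (hsc _ _ (by decide) (by decide) (by decide))
      (hsc _ _ (by decide) (by decide) (by decide))
  have hUB₂ : IsUB {R₁, R₂} (prefOfRank (extend φ ![3, 3, 4, 2] 0)) :=
    isUB_pair (isPref_prefOfRank _) (hsc _ _ (by decide) (by decide) (by decide))
      (hsc _ _ (by decide) (by decide) (by decide))
  intro hmub
  obtain ⟨Rs, hRs⟩ := hmub R₁ R₂ (isPref_prefOfRank _) (isPref_prefOfRank _)
  have hab : Rs (φ 0) (φ 1) := hRs.rel_of_mem (.inl rfl) hba ((hrank _ 0 1).mpr (by decide))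
  have hbd : SPref Rs (φ 1) (φ 3) := hRs.sPref_of_mem (.inr rfl) hdb
    ⟨(hrank _ 1 3).mpr (by decide), (hrank _ 3 1).not.mpr (by decide)⟩
  have hdc : Rs (φ 3) (φ 2) := (hRs.1.1.1 _ _).resolve_left
    (hRs.not_rel hUB₁ hdc ((hrank _ 2 3).not.mpr (by decide)))
  have hca : Rs (φ 2) (φ 0) := (hRs.1.1.1 _ _).resolve_left
    (hRs.not_rel hUB₂ hca ((hrank _ 0 2).not.mpr (by decide)))
  exact hbd.2 (hRs.1.1.2 (hRs.1.1.2 hdc hca) hab)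

end Counterexamples

section Crown

variable [PartialOrder X] {K : ℕ} {a : ℕ → X}

theorem IsCrown.le_cases (h : IsCrown (· ≤ ·) K a) {i j : ℕ} (hi : i ∈ Set.Icc 1 K)
    (hj : j ∈ Set.Icc 1 K) (hij : i ≠ j) (hle : a j ≤ a i) :
    j % 2 = 0 ∧ (i + 1 = j ∨ j + 1 = i ∨ (j = K ∧ i = 1)) := by
  obtain ⟨hK4, hKe, hinc, hval⟩ := h
  obtain ⟨hi1, hiK⟩ := hi
  obtain ⟨hj1, hjK⟩ := hj
  rw [Nat.even_iff] at hKe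
  have hv := fun k (h1 : 1 < k) (h2 : k ≤ K) (he : k % 2 = 0) => hval k h1 h2 (Nat.even_iff.mpr he)
  by_cases hji : j + 1 = i
  · refine ⟨?_, .inr (.inl hji)⟩
    by_contra hodd
    exact (hv i (by omega) hiK (by omega)).1.2 (by rwa [show i - 1 = j by omega])
  by_cases hij' : i + 1 = j
  · refine ⟨?_, .inl hij'⟩
    by_contra hodd
    have := (hv i (by omega) (by omega) (by omega)).2.2
    rw [if_neg (by omega), hij'] at this
    exact this hle
  by_cases hKi : i = K ∧ j = 1
  · have := (hv K (by omega) le_rfl hKe).2.2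
    rw [if_pos rfl, ← hKi.1, ← hKi.2] at this
    exact absurd hle this
  by_cases hjK' : j = K ∧ i = 1
  · exact ⟨by omega, .inr (.inr hjK')⟩
  rcases Nat.lt_or_gt_of_ne hij with hlt | hlt
  · exact absurd hle (hinc i j hi1 (by omega) hjK (by tauto)).2
  · exact absurd hle (hinc j i hj1 (by omega) hiK (by tauto)).1

theorem IsCrown.injOn (h : IsCrown (· ≤ ·) K a) : Set.InjOn a (Set.Icc 1 K) := by
  intro i hi j hj hij
  by_contra hne
  obtain ⟨hj2, hcase⟩ := h.le_cases hi hj hne hij.ge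
  obtain ⟨hi2, -⟩ := h.le_cases hj hi (Ne.symm hne) hij.le
  omega

theorem IsCrown.sc_extend (h : IsCrown (· ≤ ·) K a) {f g : ℕ → ℕ} (hf : ∀ k ≤ K, 0 < f k)
    (hg : ∀ k ≤ K, 0 < g k)
    (hup : ∀ j, 2 ≤ j → j ≤ K → j % 2 = 0 → f (if j = K then 1 else j + 1) < f j)
    (hdown : ∀ j, 2 ≤ j → j ≤ K → j % 2 = 0 → g j < g (j - 1)) :
    SC (prefOfRank (extend ((Set.Icc 1 K).domRestrict a) (g ∘ Subtype.val) 0))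
      (prefOfRank (extend ((Set.Icc 1 K).domRestrict a) (f ∘ Subtype.val) 0)) := by
  refine _root_.sc_extend h.injOn.injective (fun k => hf k k.2.2) (fun k => hg k k.2.2) ?_
  rintro ⟨i, hi1, hiK⟩ ⟨j, hj1, hjK⟩ hle
  simp only [Function.comp_apply]
  by_cases hij : i = j
  · subst hij
    exact ⟨fun _ => le_rfl, fun h' => absurd h' (lt_irrefl _)⟩
  obtain ⟨hje, hcase⟩ := h.le_cases ⟨hi1, hiK⟩ ⟨hj1, hjK⟩ hij hle
  rcases hcase with rfl | rfl | ⟨rfl, rfl⟩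
  · have := hdown (i + 1) (by omega) hjK hje
    rw [Nat.add_sub_cancel] at this
    exact ⟨fun _ => this.le, fun _ => this⟩
  · have := hup j (by omega) hjK hje
    rw [if_neg (by omega)] at this
    exact ⟨fun h' => absurd h' this.not_ge, fun h' => absurd h' this.not_gt⟩
  · have := hup j (by omega) hjK hje
    rw [if_pos rfl] at this
    exact ⟨fun h' => absurd h' this.not_ge, fun h' => absurd h' this.not_gt⟩

theorem IsCrown.not_forall_exists_isMUB (h : IsCrown (· ≤ ·) K a) :
    ¬ ∀ R₁ R₂ : X → X → Prop, IsPref R₁ → IsPref R₂ → ∃ Rs, IsMUB {R₁, R₂} Rs := by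
  obtain ⟨hK4, hKe, -, hval⟩ := id h
  rw [Nat.even_iff] at hKe
  let φ := (Set.Icc 1 K).domRestrict a
  have hrank : ∀ (f : ℕ → ℕ) {k l}, 1 ≤ k → k ≤ K → 1 ≤ l → l ≤ K →
      (prefOfRank (extend φ (f ∘ Subtype.val) 0) (a k) (a l) ↔ f l ≤ f k) := by
    intro f k l hk1 hkK hl1 hlK
    have hφ : ∀ {m}, 1 ≤ m → m ≤ K → extend φ (f ∘ Subtype.val) 0 (a m) = f m :=
      fun hm1 hmK => h.injOn.injective.extend_apply _ _ ⟨_, hm1, hmK⟩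
    simp only [prefOfRank, hφ hk1 hkK, hφ hl1 hlK]
  -- A minimum upper bound must rank `a (j - 1)` weakly above `a j` for even `j` (by `u₁` for
  -- `j ≥ 4`, by `u₂` for `j = 2`), and `a j` strictly above `a (j + 1)`, because both `u`s do
  -- and the upper bound `v (j / 2)` ranks `a j` strictly higher: a strict cycle around the crown.
  let u₁ : ℕ → ℕ := fun k => if k = 1 then 1 else K + 2 - k
  let u₂ : ℕ → ℕ := fun k => if k = 1 then 3 else if k = 2 then 2 else if k % 2 = 0 then 4 else 1
  let v : ℕ → ℕ → ℕ := fun m k =>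
    if k = 2 * m - 1 then 4 else if k = 2 * m then 3 else if k % 2 = 1 then 2 else 1
  set R₁ := prefOfRank (extend φ (u₁ ∘ Subtype.val) 0)
  set R₂ := prefOfRank (extend φ (u₂ ∘ Subtype.val) 0)
  have hUB : ∀ m, IsUB {R₁, R₂} (prefOfRank (extend φ (v m ∘ Subtype.val) 0)) := by
    intro m
    have hv : ∀ k ≤ K, 0 < v m k := by intro k _; simp only [v]; split_ifs <;> omega
    have hdown : ∀ j, 2 ≤ j → j ≤ K → j % 2 = 0 → v m j < v m (j - 1) := by
      intro j _ _ _; simp only [v]; split_ifs <;> omega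
    refine isUB_pair (isPref_prefOfRank _) (h.sc_extend ?_ hv ?_ hdown)
      (h.sc_extend ?_ hv ?_ hdown)
    · intro k _; simp only [u₁]; split_ifs <;> omega
    · intro j _ _ _; simp only [u₁]; split_ifs <;> omega
    · intro k _; simp only [u₂]; split_ifs <;> omega
    · intro j _ _ _; simp only [u₂]; split_ifs <;> omega
  intro hmub
  obtain ⟨Rs, hRs⟩ := hmub R₁ R₂ (isPref_prefOfRank _) (isPref_prefOfRank _)
  have hdown : ∀ j, 2 ≤ j → j ≤ K → j % 2 = 0 → Rs (a (j - 1)) (a j) := by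
    intro j hj2 hjK hje
    have hle := (hval j (by omega) hjK (Nat.even_iff.mpr hje)).1.1
    by_cases hj : j = 2
    · refine hRs.rel_of_mem (.inr rfl) hle ((hrank _ (by omega) (by omega) (by omega) hjK).mpr ?_)
      simp only [u₂]; split_ifs <;> omega
    · refine hRs.rel_of_mem (.inl rfl) hle ((hrank _ (by omega) (by omega) (by omega) hjK).mpr ?_)
      simp only [u₁]; split_ifs <;> omega
  have hup : ∀ j, 2 ≤ j → j ≤ K → j % 2 = 0 → ¬ Rs (a (if j = K then 1 else j + 1)) (a j) := by
    intro j hj2 hjK hje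
    have hle := (hval j (by omega) hjK (Nat.even_iff.mpr hje)).2.1
    have hnext : 1 ≤ (if j = K then 1 else j + 1) ∧ (if j = K then 1 else j + 1) ≤ K := by
      split_ifs <;> omega
    refine hRs.not_rel (hUB (j / 2)) hle
      ((hrank _ hnext.1 hnext.2 (by omega) hjK).not.mpr ?_)
    simp only [v]; split_ifs <;> omega
  exact hRs.1.1.not_zigzag (by omega) hKe hdown hup

end Crown

theorem existence_tfae_general (X : Type*) [PartialOrder X] :
    ((∀ P : Set (X → X → Prop), (∀ R ∈ P, IsPref R) → ∃ Rs, IsMUB P Rs) ↔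
      (∀ R1 R2 : X → X → Prop, IsPref R1 → IsPref R2 → ∃ Rs, IsMUB {R1, R2} Rs)) ∧
    ((∀ R1 R2 : X → X → Prop, IsPref R1 → IsPref R2 → ∃ Rs, IsMUB {R1, R2} Rs) ↔
      (CrownFree (· ≤ · : X → X → Prop) ∧ DiamondFree (· ≤ · : X → X → Prop))) := by
  have h12 : (∀ P : Set (X → X → Prop), (∀ R ∈ P, IsPref R) → ∃ Rs, IsMUB P Rs) →
      ∀ R1 R2 : X → X → Prop, IsPref R1 → IsPref R2 → ∃ Rs, IsMUB {R1, R2} Rs :=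
    fun h R1 R2 h1 h2 => h {R1, R2} (by rintro R (rfl | rfl); exacts [h1, h2])
  have h23 : (∀ R1 R2 : X → X → Prop, IsPref R1 → IsPref R2 → ∃ Rs, IsMUB {R1, R2} Rs) →
      CrownFree (· ≤ · : X → X → Prop) ∧ DiamondFree (· ≤ · : X → X → Prop) := fun h =>
    ⟨fun ⟨_, _, hc⟩ => hc.not_forall_exists_isMUB h,
      fun ⟨_, _, _, _, hd⟩ => hd.not_forall_exists_isMUB h⟩
  have h31 : CrownFree (· ≤ · : X → X → Prop) ∧ DiamondFree (· ≤ · : X → X → Prop) →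
      ∀ P : Set (X → X → Prop), (∀ R ∈ P, IsPref R) → ∃ Rs, IsMUB P Rs :=
    fun h _ hP => exists_isMUB hP h.2 h.1
  exact ⟨⟨h12, h31 ∘ h23⟩, ⟨h23, h12 ∘ h31⟩⟩

/-- Existence theorem: the following are equivalent: (1) every set of preferences has a
minimum upper bound; (2) every pair of preferences has a minimum upper bound; (3) the
partial order is crown- and diamond-free. -/
theorem existence_tfae (X : Type*) [Nonempty X] [PartialOrder X] :
    ((∀ P : Set (X → X → Prop), (∀ R ∈ P, IsPref R) → ∃ Rs, IsMUB P Rs) ↔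
      (∀ R1 R2 : X → X → Prop, IsPref R1 → IsPref R2 → ∃ Rs, IsMUB {R1, R2} Rs)) ∧
    ((∀ R1 R2 : X → X → Prop, IsPref R1 → IsPref R2 → ∃ Rs, IsMUB {R1, R2} Rs) ↔
      (CrownFree (· ≤ · : X → X → Prop) ∧ DiamondFree (· ≤ · : X → X → Prop))) :=
  existence_tfae_general X
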